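/- arXiv:1703.04051 — 5 statements merged into one kernel-verified Lean document; each statement's English description precedes it below -/
import Mathlib

section
/- Let H be a real Hilbert space and A : H → H (possibly set-valued) a maximal monotone operator with A⁻¹(0) nonempty. Then for every u ∈ H, the resolvents (I + λA)⁻¹ u converge strongly, as λ → ∞, to P_F u, the metric projection of u onto the closed convex set F = A⁻¹(0). -/
open scoped RealInnerProductSpace
open Filter

variable {H : Type*} [NormedAddCommGroup H] [InnerProductSpace ℝ H] [CompleteSpace H]

/-- A (possibly set-valued) operator `A : H → Set H` is monotone. -/
def IsMonotoneOp (A : H → Set H) : Prop :=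
  ∀ x₁ y₁ x₂ y₂, y₁ ∈ A x₁ → y₂ ∈ A x₂ → 0 ≤ ⟪x₁ - x₂, y₁ - y₂⟫

/-- `A` is maximal monotone: it is monotone and any pair `[x, y]` monotonically
related to the whole graph of `A` already belongs to the graph of `A`. -/
def IsMaximalMonotone (A : H → Set H) : Prop :=
  IsMonotoneOp A ∧ ∀ x y, (∀ v w, w ∈ A v → 0 ≤ ⟪v - x, w - y⟫) → y ∈ A x

/-- `J` is the resolvent `(I + βA)⁻¹` of `A`: for every `y`, `J y` satisfies
`(y - J y)/β ∈ A (J y)`, i.e. `y ∈ (I + βA)(J y)`. -/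
def IsResolvent (A : H → Set H) (β : ℝ) (J : H → H) : Prop :=
  ∀ y, β⁻¹ • (y - J y) ∈ A (J y)

/-- `p` is the metric projection of `u` onto the set `F`. -/
def IsProjection (F : Set H) (u p : H) : Prop :=
  p ∈ F ∧ ∀ q ∈ F, ‖u - p‖ ≤ ‖u - q‖

/-!
Write `x_λ = (I + λA)⁻¹ u`. Monotonicity of `A` at `x_μ` and `x_λ` gives, for `μ ≤ λ`,
`‖x_λ - x_μ‖² + ‖u - x_μ‖² ≤ ‖u - x_λ‖²`, and monotonicity at `x_λ` and a zero `q` of `A`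
gives `‖x_λ - q‖² + ‖u - x_λ‖² ≤ ‖u - q‖²`. So `‖u - x_λ‖²` increases to a finite limit, which
makes `x_λ` Cauchy; its limit `z` is a zero of `A` because the graph of a maximal monotone
operator is closed and `(u - x_λ)/λ → 0`. Passing to the limit in the second inequality with
`q = p` gives `‖z - p‖² ≤ ‖u - p‖² - ‖u - z‖² ≤ 0`.
-/

open scoped Topology
open Set

theorem cauchySeq_of_dist_sq_le_sub {α β : Type*} [PseudoMetricSpace α] [SemilatticeSup β]
    [Nonempty β] {g : β → α} {φ : β → ℝ} (hφ : BddAbove (range φ))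
    (h : ∀ s t, s ≤ t → dist (g t) (g s) ^ 2 ≤ φ t - φ s) : CauchySeq g := by
  have hmono : Monotone φ := fun s t hst => by
    linarith [h s t hst, sq_nonneg (dist (g t) (g s))]
  have hlim := tendsto_atTop_ciSup hmono hφ
  rw [Metric.cauchySeq_iff']
  intro ε hε
  obtain ⟨N, hN⟩ := eventually_atTop.1 (hlim.eventually (eventually_gt_nhds
    (sub_lt_self (⨆ t, φ t) (pow_pos hε 2))))
  refine ⟨N, fun n hn => lt_of_pow_lt_pow_left₀ 2 hε.le ?_⟩
  linarith [h N n hn, hN N le_rfl, le_ciSup hφ n]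

section InnerProductSpace

variable {E : Type*} [NormedAddCommGroup E] [InnerProductSpace ℝ E]

theorem norm_sq_add_norm_sq_le_of_inner_nonneg {x y : E} (h : 0 ≤ ⟪x, y⟫) :
    ‖x‖ ^ 2 + ‖y‖ ^ 2 ≤ ‖x + y‖ ^ 2 := by
  rw [norm_add_sq_real]
  linarith

namespace IsMonotoneOp

variable {A : E → Set E}

theorem norm_resolvent_sub_sq_add_le (hA : IsMonotoneOp A) {l : ℝ} (hl : 0 < l) {J : E → E}
    (hJ : IsResolvent A l J) {q : E} (hq : 0 ∈ A q) (u : E) :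
    ‖J u - q‖ ^ 2 + ‖u - J u‖ ^ 2 ≤ ‖u - q‖ ^ 2 := by
  have hmono := hA (J u) (l⁻¹ • (u - J u)) q 0 (hJ u) hq
  rw [sub_zero, real_inner_smul_right] at hmono
  have hinner : 0 ≤ ⟪J u - q, u - J u⟫ := nonneg_of_mul_nonneg_right hmono (inv_pos.2 hl)
  simpa using norm_sq_add_norm_sq_le_of_inner_nonneg hinner

theorem norm_resolvent_sub_resolvent_sq_add_le (hA : IsMonotoneOp A) {μ l : ℝ} (hμ : 0 < μ)
    (hμl : μ ≤ l) {Jμ Jl : E → E} (hJμ : IsResolvent A μ Jμ) (hJl : IsResolvent A l Jl)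
    (u : E) : ‖Jl u - Jμ u‖ ^ 2 + ‖u - Jμ u‖ ^ 2 ≤ ‖u - Jl u‖ ^ 2 := by
  set a := Jμ u - Jl u
  set w := u - Jμ u
  have hw : u - Jl u = a + w := by simp only [a, w]; abel
  have hmono : 0 ≤ ⟪a, μ⁻¹ • w - l⁻¹ • (a + w)⟫ := hw ▸ hA _ _ _ _ (hJμ u) (hJl u)
  rw [inner_sub_right, inner_smul_right, inner_smul_right, inner_add_right,
    real_inner_self_eq_norm_sq] at hmono
  have hinner : 0 ≤ ⟪a, w⟫ := by
    rcases hμl.eq_or_lt with rfl | hlt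
    · have : ‖a‖ ^ 2 ≤ 0 := by nlinarith [inv_pos.2 hμ]
      simp [show a = 0 by simpa using this]
    · have : 0 < μ⁻¹ - l⁻¹ := sub_pos.2 (inv_strictAnti₀ hμ hlt)
      nlinarith [inv_pos.2 (hμ.trans hlt), sq_nonneg ‖a‖]
  rw [norm_sub_rev, hw]
  exact norm_sq_add_norm_sq_le_of_inner_nonneg hinner

end IsMonotoneOp

theorem IsMaximalMonotone.mem_of_tendsto {A : E → Set E} (hA : IsMaximalMonotone A)
    {ι : Type*} {L : Filter ι} [L.NeBot] {x y : ι → E} {x₀ y₀ : E} (hx : Tendsto x L (𝓝 x₀))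
    (hy : Tendsto y L (𝓝 y₀)) (hxy : ∀ᶠ i in L, y i ∈ A (x i)) : y₀ ∈ A x₀ :=
  hA.2 x₀ y₀ fun v w hw =>
    ge_of_tendsto ((tendsto_const_nhds.sub hx).inner (tendsto_const_nhds.sub hy))
      (hxy.mono fun _ hi => hA.1 v w _ _ hw hi)

end InnerProductSpace

theorem stmt_0_general (A : H → Set H) (hA : IsMaximalMonotone A)
    (F : Set H) (hF : F = {x | (0 : H) ∈ A x})
    (J : ℝ → H → H) (hJ : ∀ l : ℝ, 0 < l → IsResolvent A l (J l))
    (u p : H) (hp : IsProjection F u p) :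
    Tendsto (fun l : ℝ => J l u) atTop (nhds p) := by
  subst hF
  obtain ⟨hpF, hpmin⟩ := hp
  -- Reparametrizing by `λ = exp t` makes the path defined for every real `t`.
  have hcauchy : CauchySeq fun t => J (Real.exp t) u := by
    refine cauchySeq_of_dist_sq_le_sub (φ := fun t => ‖u - J (Real.exp t) u‖ ^ 2)
      ⟨‖u - p‖ ^ 2, ?_⟩ fun s t hst => ?_
    · rintro _ ⟨t, rfl⟩
      have := hA.1.norm_resolvent_sub_sq_add_le (Real.exp_pos t) (hJ _ (Real.exp_pos t)) hpF u
      linarith [sq_nonneg ‖J (Real.exp t) u - p‖]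
    · have := hA.1.norm_resolvent_sub_resolvent_sq_add_le (Real.exp_pos s)
        (Real.exp_le_exp.2 hst) (hJ _ (Real.exp_pos s)) (hJ _ (Real.exp_pos t)) u
      rw [dist_eq_norm]
      linarith
  obtain ⟨z, hz⟩ := cauchySeq_tendsto_of_complete hcauchy
  replace hz : Tendsto (fun l => J l u) atTop (𝓝 z) := Real.tendsto_comp_exp_atTop.1 hz
  have hzF : (0 : H) ∈ A z := by
    refine hA.mem_of_tendsto hz (y := fun l => l⁻¹ • (u - J l u)) ?_
      ((eventually_gt_atTop 0).mono fun l hl => hJ l hl u)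
    simpa using tendsto_inv_atTop_zero.smul (tendsto_const_nhds.sub hz)
  have hlim : ‖z - p‖ ^ 2 + ‖u - z‖ ^ 2 ≤ ‖u - p‖ ^ 2 :=
    le_of_tendsto (((hz.sub_const p).norm.pow 2).add ((tendsto_const_nhds.sub hz).norm.pow 2))
      ((eventually_gt_atTop 0).mono fun l hl =>
        hA.1.norm_resolvent_sub_sq_add_le hl (hJ l hl) hpF u)
  have hzp : z = p := by
    have : ‖z - p‖ ^ 2 ≤ 0 := by nlinarith [hpmin z hzF, norm_nonneg (u - p)]
    simpa [sub_eq_zero] using this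
  rwa [← hzp]

/-- Bruck–Moroşanu: the resolvents `(I + λA)⁻¹ u` converge strongly, as `λ → ∞`,
to the metric projection of `u` onto `F = A⁻¹(0)`. -/
theorem stmt_0 (A : H → Set H) (hA : IsMaximalMonotone A)
    (F : Set H) (hF : F = {x | (0 : H) ∈ A x}) (hne : F.Nonempty)
    (J : ℝ → H → H) (hJ : ∀ l : ℝ, 0 < l → IsResolvent A l (J l))
    (u p : H) (hp : IsProjection F u p) :
    Tendsto (fun l : ℝ => J l u) atTop (nhds p) :=
  stmt_0_general A hA F hF J hJ u p hp
end

section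
/- Let A be a maximal monotone operator on a real Hilbert space H with F = A⁻¹(0) nonempty. Suppose β_n > 0 with β_n → ∞, α_n ∈ ℝ with α_n → 0, e_n ∈ H with α_n·e_n → 0, and u_n → u in H. Then for every starting point x₀ ∈ H, the sequence defined by x_{n+1} = (I + β_n A)⁻¹(u_n + α_n(x_n + e_n)) converges strongly to P_F u. -/
open scoped RealInnerProductSpace
open Filter

variable {H : Type*} [NormedAddCommGroup H] [InnerProductSpace ℝ H] [CompleteSpace H]

/-!
Monotonicity of `A` at two points of the resolvent path `β ↦ J_β u` shows that `‖u - J_β u‖²`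
increases with `β` and that its increment dominates `‖J_β u - J_β' u‖²`, so the path is Cauchy.
Its limit is a zero of `A`, since the graph of a maximal monotone operator is closed and the
residuals `(u - J_β u)/β` tend to `0`, and it satisfies the variational inequality that
characterizes `P_F u`. The iterates stay bounded because each resolvent is nonexpansive and
fixes `F` while `α_n → 0`; hence the arguments `u_n + α_n (x_n + e_n)` tend to `u`, and
nonexpansiveness gives `‖x_{n+1} - J_{β_n} u‖ → 0`.
-/

open Topology

theorem cauchySeq_of_sq_dist_le_sub {α : Type*} [PseudoMetricSpace α] {z : ℕ → α} {f : ℕ → ℝ}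
    (hf : BddAbove (Set.range f)) (h : ∀ m, ∀ᶠ n in atTop, dist (z m) (z n) ^ 2 ≤ f n - f m) :
    CauchySeq z := by
  rw [Metric.cauchySeq_iff]
  intro ε hε
  obtain ⟨_, ⟨k, rfl⟩, hk⟩ := exists_lt_of_lt_csSup (Set.range_nonempty f)
    (sub_lt_self (sSup (Set.range f)) (pow_pos (half_pos hε) 2))
  obtain ⟨N, hN⟩ := eventually_atTop.1 (h k)
  have hclose : ∀ n ≥ N, dist (z k) (z n) < ε / 2 := by
    intro n hn
    have hfn := le_csSup hf ⟨n, rfl⟩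
    exact lt_of_pow_lt_pow_left₀ 2 (half_pos hε).le (by linarith [hN n hn])
  refine ⟨N, fun m hm n hn => ?_⟩
  calc dist (z m) (z n) ≤ dist (z k) (z m) + dist (z k) (z n) := dist_triangle_left _ _ _
    _ < ε / 2 + ε / 2 := add_lt_add (hclose m hm) (hclose n hn)
    _ = ε := add_halves ε

theorem isBoundedUnder_of_le_mul_add {d a c : ℕ → ℝ} (hd : ∀ n, d (n + 1) ≤ a n * d n + c n)
    (ha0 : ∀ n, 0 ≤ a n) (ha : Tendsto a atTop (𝓝 0)) (hc : IsBoundedUnder (· ≤ ·) atTop c) :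
    IsBoundedUnder (· ≤ ·) atTop d := by
  obtain ⟨C, hC⟩ := hc
  obtain ⟨N, hN⟩ := eventually_atTop.1 ((ha.eventually (ge_mem_nhds one_half_pos)).and hC)
  set B := max (d N) (2 * max C 0)
  have hB : ∀ k, d (N + k) ≤ B := by
    intro k
    induction k with
    | zero => exact le_max_left _ _
    | succ k ih =>
      obtain ⟨haN, hcN⟩ := hN (N + k) (Nat.le_add_right N k)
      have h2C : 2 * max C 0 ≤ B := le_max_right _ _
      have hCC : C ≤ max C 0 := le_max_left C 0
      have hB0 : 0 ≤ B := (mul_nonneg zero_le_two (le_max_right C 0)).trans h2C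
      have hcN' : c (N + k) ≤ C := hcN
      calc d (N + (k + 1)) ≤ a (N + k) * d (N + k) + c (N + k) := hd (N + k)
        _ ≤ a (N + k) * B + c (N + k) := by gcongr; exact ha0 _
        _ ≤ B := by linarith [mul_le_mul_of_nonneg_right haN hB0]
  refine isBoundedUnder_of_eventually_le (a := B) (eventually_atTop.2 ⟨N, fun n hn => ?_⟩)
  obtain ⟨k, rfl⟩ := Nat.exists_eq_add_of_le hn
  exact hB k

section HilbertSpace

variable {E : Type*} [NormedAddCommGroup E] [InnerProductSpace ℝ E] {A : E → Set E}

theorem norm_sub_le_of_inner_sub_nonneg {w w' y y' : E}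
    (h : 0 ≤ ⟪w - w', (y - w) - (y' - w')⟫) : ‖w - w'‖ ≤ ‖y - y'‖ := by
  have hsplit : ⟪w - w', y - y'⟫ = ⟪w - w', (y - w) - (y' - w')⟫ + ‖w - w'‖ ^ 2 := by
    rw [← real_inner_self_eq_norm_sq, ← inner_add_right]
    congr 1
    abel
  have hcs := real_inner_le_norm (w - w') (y - y')
  nlinarith [norm_nonneg (w - w'), norm_nonneg (y - y')]

theorem eq_of_inner_nonneg_of_norm_le {u z q : E} (h : 0 ≤ ⟪z - q, u - z⟫)
    (hq : ‖u - q‖ ≤ ‖u - z‖) : q = z := by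
  have hexp : ‖u - q‖ ^ 2 = ‖u - z‖ ^ 2 + 2 * ⟪z - q, u - z⟫ + ‖z - q‖ ^ 2 := by
    rw [show u - q = (u - z) + (z - q) by abel, norm_add_sq_real, real_inner_comm]
  have hzq : ‖z - q‖ = 0 := by nlinarith [norm_nonneg (u - q), norm_nonneg (z - q)]
  exact (sub_eq_zero.1 (norm_eq_zero.1 hzq)).symm

theorem IsMonotoneOp.inner_sub_nonneg_of_smul_mem (hA : IsMonotoneOp A) {β : ℝ} (hβ : 0 < β)
    {w₁ w₂ v₁ v₂ : E} (h₁ : β⁻¹ • v₁ ∈ A w₁) (h₂ : β⁻¹ • v₂ ∈ A w₂) :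
    0 ≤ ⟪w₁ - w₂, v₁ - v₂⟫ := by
  have h := hA w₁ _ w₂ _ h₁ h₂
  rw [← smul_sub, real_inner_smul_right] at h
  exact (mul_nonneg_iff_of_pos_left (inv_pos.2 hβ)).1 h

theorem IsMaximalMonotone.mem_of_tendsto_s1 (hA : IsMaximalMonotone A) {ι : Type*} {l : Filter ι}
    [l.NeBot] {z v : ι → E} {x y : E} (hz : Tendsto z l (𝓝 x)) (hv : Tendsto v l (𝓝 y))
    (hzv : ∀ i, v i ∈ A (z i)) : y ∈ A x :=
  hA.2 x y fun w t ht => ge_of_tendsto' ((tendsto_const_nhds.sub hz).inner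
    (tendsto_const_nhds.sub hv)) fun i => hA.1 w t (z i) (v i) ht (hzv i)

namespace IsResolvent

variable {β : ℝ} {J : E → E}

theorem norm_sub_le (hA : IsMonotoneOp A) (hβ : 0 < β) (hJ : IsResolvent A β J) (y y' : E) :
    ‖J y - J y'‖ ≤ ‖y - y'‖ :=
  norm_sub_le_of_inner_sub_nonneg (hA.inner_sub_nonneg_of_smul_mem hβ (hJ y) (hJ y'))

theorem inner_nonneg_of_zero_mem (hA : IsMonotoneOp A) (hβ : 0 < β) (hJ : IsResolvent A β J)
    (y : E) {q : E} (hq : 0 ∈ A q) : 0 ≤ ⟪J y - q, y - J y⟫ := by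
  simpa using hA.inner_sub_nonneg_of_smul_mem hβ (hJ y) (v₂ := 0) (by rwa [smul_zero])

theorem norm_sub_le_of_zero_mem (hA : IsMonotoneOp A) (hβ : 0 < β) (hJ : IsResolvent A β J)
    (y : E) {q : E} (hq : 0 ∈ A q) : ‖J y - q‖ ≤ ‖y - q‖ :=
  norm_sub_le_of_inner_sub_nonneg (by
    rw [sub_self, sub_zero]
    exact hJ.inner_nonneg_of_zero_mem hA hβ y hq)

/-- Monotonicity of `A` at `J u` and `J' u` says `(β' - β) ⟪J u - J' u, u - J u⟫ ≥ β ‖J u - J' u‖²`,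
so the angle at `J u` in the triangle `u, J u, J' u` is not acute. -/
theorem norm_sub_sq_le_of_le (hA : IsMonotoneOp A) {β' : ℝ} {J' : E → E} (hβ : 0 < β)
    (hββ' : β ≤ β') (hJ : IsResolvent A β J) (hJ' : IsResolvent A β' J') (u : E) :
    ‖J u - J' u‖ ^ 2 ≤ ‖u - J' u‖ ^ 2 - ‖u - J u‖ ^ 2 := by
  have hmono := hA (J u) _ (J' u) _ (hJ u) (hJ' u)
  set a := u - J' u
  set b := u - J u
  have hab : J u - J' u = a - b := by simp only [a, b]; abel
  rw [hab] at hmono ⊢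
  have hkey : β * ‖a - b‖ ^ 2 ≤ (β' - β) * ⟪a - b, b⟫ := by
    have hsplit : ⟪a - b, a⟫ = ‖a - b‖ ^ 2 + ⟪a - b, b⟫ := by
      rw [← real_inner_self_eq_norm_sq, ← inner_add_right, sub_add_cancel]
    have hscale : β * β' * ⟪a - b, β⁻¹ • b - β'⁻¹ • a⟫
        = (β' - β) * ⟪a - b, b⟫ - β * ‖a - b‖ ^ 2 := by
      rw [inner_sub_right, real_inner_smul_right, real_inner_smul_right, hsplit]
      field_simp [(hβ.trans_le hββ').ne']
      ring
    nlinarith [mul_nonneg (mul_pos hβ (hβ.trans_le hββ')).le hmono]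
  have hb : 0 ≤ ⟪a - b, b⟫ := by
    rcases hββ'.lt_or_eq with hlt | rfl
    · exact (mul_nonneg_iff_of_pos_left (sub_pos.2 hlt)).1 (le_trans (by positivity) hkey)
    · rw [sub_self, zero_mul] at hkey
      have hab0 : ‖a - b‖ ^ 2 = 0 := (nonpos_of_mul_nonpos_right hkey hβ).antisymm (by positivity)
      rw [norm_eq_zero.1 (pow_eq_zero_iff two_ne_zero |>.1 hab0), inner_zero_left]
  have hexp : ‖a‖ ^ 2 = ‖a - b‖ ^ 2 + 2 * ⟪a - b, b⟫ + ‖b‖ ^ 2 := by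
    rw [← norm_add_sq_real, sub_add_cancel]
  linarith

end IsResolvent

theorem tendsto_resolvent_of_isProjection [CompleteSpace E] (hA : IsMaximalMonotone A)
    {β : ℕ → ℝ} (hβpos : ∀ n, 0 < β n) (hβ : Tendsto β atTop atTop) {J : ℕ → E → E}
    (hJ : ∀ n, IsResolvent A (β n) (J n)) {u p : E} (hp : IsProjection {x | (0 : E) ∈ A x} u p) :
    Tendsto (fun n => J n u) atTop (𝓝 p) := by
  have hpA : (0 : E) ∈ A p := hp.1
  have hbound : ∀ n, ‖u - J n u‖ ≤ 2 * ‖u - p‖ := fun n => by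
    have hJp := (hJ n).norm_sub_le_of_zero_mem hA.1 (hβpos n) u hpA
    rw [norm_sub_rev] at hJp
    linarith [norm_sub_le_norm_sub_add_norm_sub u p (J n u)]
  have hcauchy : CauchySeq fun n => J n u := by
    refine cauchySeq_of_sq_dist_le_sub (f := fun n => ‖u - J n u‖ ^ 2) ⟨(2 * ‖u - p‖) ^ 2, ?_⟩
      fun m => (hβ.eventually_ge_atTop (β m)).mono fun n hn => ?_
    · rintro _ ⟨n, rfl⟩
      exact pow_le_pow_left₀ (norm_nonneg _) (hbound n) 2
    · rw [dist_eq_norm]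
      exact (hJ m).norm_sub_sq_le_of_le hA.1 (hβpos m) hn (hJ n) u
  obtain ⟨z, hz⟩ := cauchySeq_tendsto_of_complete hcauchy
  have hresidual : Tendsto (fun n => (β n)⁻¹ • (u - J n u)) atTop (𝓝 0) :=
    hβ.inv_tendsto_atTop.zero_smul_isBoundedUnder_le
      (isBoundedUnder_of_eventually_le (Eventually.of_forall hbound))
  have hzA : (0 : E) ∈ A z := hA.mem_of_tendsto_s1 hz hresidual fun n => hJ n u
  have hvar : 0 ≤ ⟪z - p, u - z⟫ :=
    ge_of_tendsto' ((hz.sub tendsto_const_nhds).inner (tendsto_const_nhds.sub hz))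
      fun n => (hJ n).inner_nonneg_of_zero_mem hA.1 (hβpos n) u hpA
  rwa [eq_of_inner_nonneg_of_norm_le hvar (hp.2 z hzA)]

end HilbertSpace

theorem stmt_1_general (A : H → Set H) (hA : IsMaximalMonotone A)
    (F : Set H) (hF : F = {x | (0 : H) ∈ A x})
    (β : ℕ → ℝ) (hβpos : ∀ n, 0 < β n) (hβ : Tendsto β atTop atTop)
    (α : ℕ → ℝ) (hα : Tendsto α atTop (nhds 0))
    (e : ℕ → H) (hαe : Tendsto (fun n => α n • e n) atTop (nhds 0))
    (useq : ℕ → H) (u : H) (hu : Tendsto useq atTop (nhds u))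
    (J : ℕ → H → H) (hJ : ∀ n, IsResolvent A (β n) (J n))
    (x : ℕ → H) (hx : ∀ n, x (n + 1) = J n (useq n + α n • (x n + e n)))
    (p : H) (hp : IsProjection F u p) :
    Tendsto x atTop (nhds p) := by
  subst hF
  set w : ℕ → H := fun n => useq n + α n • (p + e n)
  have hw : Tendsto w atTop (𝓝 u) := by
    simpa only [w, smul_add, zero_smul, add_zero] using hu.add ((hα.smul_const p).add hαe)
  have harg : ∀ n, useq n + α n • (x n + e n) = w n + α n • (x n - p) := fun n => by
    simp only [w]
    module
  have hbdd : IsBoundedUnder (· ≤ ·) atTop fun n => ‖x n - p‖ := by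
    refine isBoundedUnder_of_le_mul_add (a := fun n => |α n|) (c := fun n => ‖w n - p‖)
      (fun n => ?_) (fun n => abs_nonneg _) (by simpa using hα.abs)
      (hw.sub_const p).norm.isBoundedUnder_le
    calc ‖x (n + 1) - p‖ ≤ ‖w n + α n • (x n - p) - p‖ := by
          rw [hx n, harg]
          exact (hJ n).norm_sub_le_of_zero_mem hA.1 (hβpos n) _ hp.1
      _ ≤ |α n| * ‖x n - p‖ + ‖w n - p‖ := by
          rw [add_sub_right_comm, add_comm, ← Real.norm_eq_abs, ← norm_smul]
          exact norm_add_le _ _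
  have hy : Tendsto (fun n => useq n + α n • (x n + e n)) atTop (𝓝 u) := by
    simpa only [harg, add_zero] using hw.add (hα.zero_smul_isBoundedUnder_le hbdd)
  have hdist : Tendsto (fun n => dist (J n u) (x (n + 1))) atTop (𝓝 0) := by
    refine squeeze_zero (fun _ => dist_nonneg) (fun n => ?_)
      (by simpa only [dist_self] using hy.dist (tendsto_const_nhds (x := u)))
    rw [hx n, dist_eq_norm, dist_eq_norm, ← norm_neg, neg_sub]
    exact (hJ n).norm_sub_le hA.1 (hβpos n) _ u
  exact (tendsto_add_atTop_iff_nat 1).1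
    ((tendsto_resolvent_of_isProjection hA hβpos hβ hJ hp).congr_dist hdist)

/-- Main theorem: under hypotheses (H), the sequence generated by
`x_{n+1} = (I + β_n A)⁻¹ (u_n + α_n (x_n + e_n))` converges strongly to `P_F u`. -/
theorem stmt_1 (A : H → Set H) (hA : IsMaximalMonotone A)
    (F : Set H) (hF : F = {x | (0 : H) ∈ A x}) (hne : F.Nonempty)
    (β : ℕ → ℝ) (hβpos : ∀ n, 0 < β n) (hβ : Tendsto β atTop atTop)
    (α : ℕ → ℝ) (hα : Tendsto α atTop (nhds 0))
    (e : ℕ → H) (hαe : Tendsto (fun n => α n • e n) atTop (nhds 0))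
    (useq : ℕ → H) (u : H) (hu : Tendsto useq atTop (nhds u))
    (J : ℕ → H → H) (hJ : ∀ n, IsResolvent A (β n) (J n))
    (x : ℕ → H) (hx : ∀ n, x (n + 1) = J n (useq n + α n • (x n + e n)))
    (p : H) (hp : IsProjection F u p) :
    Tendsto x atTop (nhds p) :=
  stmt_1_general A hA F hF β hβpos hβ α hα e hαe useq u hu J hJ x hx p hp
end

section
/- Let A be a maximal monotone operator on a real Hilbert space H. Suppose β_n → ∞, (u_n) is bounded, |α_n| ≤ c < 1, (α_n e_n) is bounded, and for some x₀ ∈ H the sequence x_{n+1} = (I + β_n A)⁻¹(u_n + α_n(x_n + e_n)) is bounded. Then A⁻¹(0) is nonempty; indeed every weak cluster point p of (x_n) satisfies 0 ∈ A(p). -/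
/-!
The residuals `w n = (y n - x (n + 1)) / β n`, where `y n` is the point the `n`-th resolvent is
applied to, lie in `A (x (n + 1))` and tend to `0` because `β n → ∞` while `y n` and `x (n + 1)`
stay bounded. The graph of a maximal monotone operator is sequentially closed for weak
convergence in the first and strong convergence in the second variable: passing to the limit in
`0 ≤ ⟪v - x n, z - w n⟫` gives `0 ≤ ⟪v - p, z⟫` for every `z ∈ A v`, hence `0 ∈ A p` by
maximality. A weak cluster point exists by sequential Banach–Alaoglu, applied in the closed span
of the sequence, which is separable.
-/

open scoped RealInnerProductSpace
open Filter

variable {H : Type*} [NormedAddCommGroup H] [InnerProductSpace ℝ H] [CompleteSpace H]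

open Topology

section

variable {E : Type*} [NormedAddCommGroup E] [InnerProductSpace ℝ E]

theorem exists_subseq_weak_tendsto_of_separableSpace [CompleteSpace E]
    [TopologicalSpace.SeparableSpace E] (x : ℕ → E) (M : ℝ) (hM : ∀ n, ‖x n‖ ≤ M) :
    ∃ (p : E) (φ : ℕ → ℕ), StrictMono φ ∧
      ∀ v : E, Tendsto (fun k => ⟪v, x (φ k)⟫) atTop (𝓝 ⟪v, p⟫) := by
  let f : ℕ → WeakDual ℝ E := fun n => StrongDual.toWeakDual (InnerProductSpace.toDual ℝ E (x n))
  have hf : ∀ n, f n ∈ WeakDual.toStrongDual ⁻¹' Metric.closedBall 0 M := fun n => by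
    simpa [f] using hM n
  obtain ⟨ℓ, -, φ, hφ, hlim⟩ := WeakDual.isSeqCompact_closedBall ℝ E 0 M hf
  refine ⟨(InnerProductSpace.toDual ℝ E).symm ℓ.toStrongDual, φ, hφ, fun v => ?_⟩
  rw [real_inner_comm, InnerProductSpace.toDual_symm_apply, WeakDual.toStrongDual_apply]
  convert ((WeakDual.eval_continuous v).tendsto ℓ).comp hlim using 2 with k
  simp [f, StrongDual.toWeakDual_apply, real_inner_comm]

theorem exists_subseq_weak_tendsto [CompleteSpace E] (x : ℕ → E) (M : ℝ) (hM : ∀ n, ‖x n‖ ≤ M) :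
    ∃ (p : E) (φ : ℕ → ℕ), StrictMono φ ∧
      ∀ v : E, Tendsto (fun k => ⟪v, x (φ k)⟫) atTop (𝓝 ⟪v, p⟫) := by
  set K := (Submodule.span ℝ (Set.range x)).topologicalClosure
  have hxK : ∀ n, x n ∈ K :=
    fun n => Submodule.le_topologicalClosure _ (Submodule.subset_span ⟨n, rfl⟩)
  have : CompleteSpace K := (Submodule.isClosed_topologicalClosure _).completeSpace_coe
  have : TopologicalSpace.SeparableSpace K :=
    ((Set.countable_range x).isSeparable.span.closure).separableSpace
  obtain ⟨p, φ, hφ, hlim⟩ :=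
    exists_subseq_weak_tendsto_of_separableSpace (fun n => (⟨x n, hxK n⟩ : K)) M hM
  exact ⟨p, φ, hφ, fun v => by simpa using hlim (K.orthogonalProjectionOnto v)⟩

theorem tendsto_inner_of_weak_tendsto_of_tendsto {a b : ℕ → E} {p y : E} (ha : ∃ M, ∀ k, ‖a k‖ ≤ M) (hap : ∀ v : E, Tendsto (fun k => ⟪v, a k⟫) atTop (𝓝 ⟪v, p⟫))
    (hb : Tendsto b atTop (𝓝 y)) :
    Tendsto (fun k => ⟪a k, b k⟫) atTop (𝓝 ⟪p, y⟫) := by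
  have hay : Tendsto (fun k => ⟪a k, y⟫) atTop (𝓝 ⟪p, y⟫) := by
    simpa only [real_inner_comm y] using hap y
  have hab : Tendsto (fun k => ⟪a k, b k - y⟫) atTop (𝓝 0) :=
    (tendsto_sub_nhds_zero_iff.2 hb).op_zero_isBoundedUnder_le (isBoundedUnder_of ha)
      (fun u w => ⟪w, u⟫) fun u w => (norm_inner_le_norm w u).trans_eq (mul_comm _ _)
  simpa only [inner_sub_right, add_sub_cancel, add_zero] using hay.add hab

theorem IsMaximalMonotone.mem_of_weak_tendsto_of_tendsto {A : E → Set E}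
    (hA : IsMaximalMonotone A) {a b : ℕ → E} {p y : E} (ha : ∃ M, ∀ k, ‖a k‖ ≤ M)
    (hap : ∀ v : E, Tendsto (fun k => ⟪v, a k⟫) atTop (𝓝 ⟪v, p⟫))
    (hb : Tendsto b atTop (𝓝 y)) (hab : ∀ᶠ k in atTop, b k ∈ A (a k)) : y ∈ A p := by
  refine hA.2 p y fun v z hz => ?_
  obtain ⟨M, hM⟩ := ha
  have hlim : Tendsto (fun k => ⟪v - a k, z - b k⟫) atTop (𝓝 ⟪v - p, z - y⟫) :=
    tendsto_inner_of_weak_tendsto_of_tendsto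
      ⟨‖v‖ + M, fun k => (norm_sub_le _ _).trans (by linarith [hM k])⟩
      (fun u => by simpa only [inner_sub_right] using tendsto_const_nhds.sub (hap u))
      (tendsto_const_nhds.sub hb)
  exact ge_of_tendsto hlim (hab.mono fun k hk => hA.1 v z (a k) (b k) hz hk)

theorem IsMaximalMonotone.zero_mem_of_weak_tendsto_subseq {A : E → Set E}
    (hA : IsMaximalMonotone A) {x w : ℕ → E} (hx : ∃ M, ∀ n, ‖x n‖ ≤ M)
    (hw : ∀ n, w n ∈ A (x (n + 1))) (hw0 : Tendsto w atTop (𝓝 0)) {p : E} {φ : ℕ → ℕ}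
    (hφ : StrictMono φ) (hxp : ∀ v : E, Tendsto (fun k => ⟪v, x (φ k)⟫) atTop (𝓝 ⟪v, p⟫)) :
    (0 : E) ∈ A p := by
  obtain ⟨M, hM⟩ := hx
  refine hA.mem_of_weak_tendsto_of_tendsto (b := fun k => w (φ k - 1)) ⟨M, fun k => hM (φ k)⟩
    hxp (hw0.comp ((tendsto_sub_atTop_nat 1).comp hφ.tendsto_atTop)) ?_
  filter_upwards [eventually_ge_atTop 1] with k hk
  have hφk : φ k - 1 + 1 = φ k := Nat.sub_add_cancel (hk.trans (hφ.le_apply))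
  simpa only [hφk] using hw (φ k - 1)

end

theorem stmt_3_general (A : H → Set H) (hA : IsMaximalMonotone A)
    (β : ℕ → ℝ) (hβ : Tendsto β atTop atTop)
    (useq : ℕ → H) (hub : ∃ M, ∀ n, ‖useq n‖ ≤ M)
    (α : ℕ → ℝ) (c : ℝ) (hc : c < 1) (hαc : ∀ n, |α n| ≤ c)
    (e : ℕ → H) (hαe : ∃ M, ∀ n, ‖α n • e n‖ ≤ M)
    (J : ℕ → H → H) (hJ : ∀ n, IsResolvent A (β n) (J n))
    (x : ℕ → H) (hx : ∀ n, x (n + 1) = J n (useq n + α n • (x n + e n)))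
    (hxb : ∃ M, ∀ n, ‖x n‖ ≤ M) :
    (∃ p, (0 : H) ∈ A p) ∧
      ∀ (p : H) (φ : ℕ → ℕ), StrictMono φ →
        (∀ v : H, Tendsto (fun k => ⟪v, x (φ k)⟫) atTop (nhds ⟪v, p⟫)) →
        (0 : H) ∈ A p := by
  obtain ⟨Mu, hMu⟩ := hub
  obtain ⟨Me, hMe⟩ := hαe
  obtain ⟨Mx, hMx⟩ := hxb
  set y : ℕ → H := fun n => useq n + α n • (x n + e n)
  have hres : ∀ n, (β n)⁻¹ • (y n - x (n + 1)) ∈ A (x (n + 1)) := fun n => by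
    simpa only [hx n] using hJ n (y n)
  have hy : ∀ n, ‖y n - x (n + 1)‖ ≤ Mu + (Mx + Me) + Mx := fun n => by
    have hαx : ‖α n • x n‖ ≤ Mx :=
      calc ‖α n • x n‖ = |α n| * ‖x n‖ := norm_smul _ _
        _ ≤ 1 * ‖x n‖ := by gcongr; linarith [hαc n]
        _ ≤ Mx := by linarith [hMx n]
    have hyn : ‖y n‖ ≤ ‖useq n‖ + (‖α n • x n‖ + ‖α n • e n‖) := by
      simp only [y, smul_add]
      exact (norm_add_le _ _).trans (add_le_add_right (norm_add_le _ _) _)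
    calc ‖y n - x (n + 1)‖ ≤ ‖y n‖ + ‖x (n + 1)‖ := norm_sub_le _ _
      _ ≤ Mu + (Mx + Me) + Mx := by linarith [hMu n, hMe n, hMx (n + 1)]
  have hres0 : Tendsto (fun n => (β n)⁻¹ • (y n - x (n + 1))) atTop (𝓝 0) :=
    hβ.inv_tendsto_atTop.zero_smul_isBoundedUnder_le (isBoundedUnder_of ⟨_, hy⟩)
  have hzero : ∀ (p : H) (φ : ℕ → ℕ), StrictMono φ →
      (∀ v : H, Tendsto (fun k => ⟪v, x (φ k)⟫) atTop (𝓝 ⟪v, p⟫)) → (0 : H) ∈ A p :=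
    fun _ _ hφ hxp => hA.zero_mem_of_weak_tendsto_subseq ⟨Mx, hMx⟩ hres hres0 hφ hxp
  obtain ⟨p, φ, hφ, hxp⟩ := exists_subseq_weak_tendsto x Mx hMx
  exact ⟨⟨p, hzero p φ hφ hxp⟩, hzero⟩

/-- If the sequence generated by the algorithm is bounded (with `β_n → ∞`, `(u_n)` bounded,
`|α_n| ≤ c < 1`, `(α_n e_n)` bounded), then `A⁻¹(0)` is nonempty; indeed every weak
cluster point `p` of `(x_n)` satisfies `0 ∈ A p`. -/
theorem stmt_3 (A : H → Set H) (hA : IsMaximalMonotone A)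
    (β : ℕ → ℝ) (hβpos : ∀ n, 0 < β n) (hβ : Tendsto β atTop atTop)
    (useq : ℕ → H) (hub : ∃ M, ∀ n, ‖useq n‖ ≤ M)
    (α : ℕ → ℝ) (c : ℝ) (hc : c < 1) (hαc : ∀ n, |α n| ≤ c)
    (e : ℕ → H) (hαe : ∃ M, ∀ n, ‖α n • e n‖ ≤ M)
    (J : ℕ → H → H) (hJ : ∀ n, IsResolvent A (β n) (J n))
    (x : ℕ → H) (hx : ∀ n, x (n + 1) = J n (useq n + α n • (x n + e n)))
    (hxb : ∃ M, ∀ n, ‖x n‖ ≤ M) :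
    (∃ p, (0 : H) ∈ A p) ∧
      ∀ (p : H) (φ : ℕ → ℕ), StrictMono φ →
        (∀ v : H, Tendsto (fun k => ⟪v, x (φ k)⟫) atTop (nhds ⟪v, p⟫)) →
        (0 : H) ∈ A p :=
  stmt_3_general A hA β hβ useq hub α c hc hαc e hαe J hJ x hx hxb
end

section
/- Let A be a maximal monotone operator on a real Hilbert space H with F = A⁻¹(0) nonempty. Let λ_n ∈ (0,1) with λ_n → 1, β_n > 0 with β_n → ∞, u ∈ H, and (e_n) a sequence in H with (1 − λ_n)e_n → 0. Then for every x₀ ∈ H the sequence x_{n+1} = (I + β_n A)⁻¹(λ_n u + (1 − λ_n)(x_n + e_n)) converges strongly to P_F u. -/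
open scoped RealInnerProductSpace
open Filter

variable {H : Type*} [NormedAddCommGroup H] [InnerProductSpace ℝ H] [CompleteSpace H]

lemma resolvent_inner {A : H → Set H} (hA : IsMonotoneOp A) {β : ℝ} (hβ : 0 < β)
    {J : H → H} (hJ : IsResolvent A β J) (y z : H) :
    ‖J y - J z‖ ^ 2 ≤ ⟪J y - J z, y - z⟫ := by
  have h := hA (J y) _ (J z) _ (hJ y) (hJ z)
  have e : β⁻¹ • (y - J y) - β⁻¹ • (z - J z) = β⁻¹ • ((y - z) - (J y - J z)) := by
    rw [← smul_sub]; congr 1; abel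
  rw [e, real_inner_smul_right] at h
  have hβ' : 0 < β⁻¹ := inv_pos.mpr hβ
  have h2 : 0 ≤ ⟪J y - J z, (y - z) - (J y - J z)⟫ :=
    nonneg_of_mul_nonneg_right h hβ'
  rw [inner_sub_right, real_inner_self_eq_norm_sq] at h2
  linarith

lemma resolvent_nonexpansive {A : H → Set H} (hA : IsMonotoneOp A) {β : ℝ} (hβ : 0 < β)
    {J : H → H} (hJ : IsResolvent A β J) (y z : H) :
    ‖J y - J z‖ ≤ ‖y - z‖ := by
  have h := resolvent_inner hA hβ hJ y z
  have hcs := real_inner_le_norm (J y - J z) (y - z)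
  by_contra hlt
  push_neg at hlt
  nlinarith [norm_nonneg (J y - J z), norm_nonneg (y - z)]

lemma resolvent_key {A : H → Set H} (hA : IsMonotoneOp A) {β : ℝ} (hβ : 0 < β)
    {J : H → H} (hJ : IsResolvent A β J) {q : H} (hq : (0 : H) ∈ A q) (w : H) :
    0 ≤ ⟪J w - q, w - J w⟫ := by
  have h := hA (J w) _ q 0 (hJ w) hq
  rw [sub_zero, real_inner_smul_right] at h
  exact nonneg_of_mul_nonneg_right h (inv_pos.mpr hβ)

lemma resolvent_le {A : H → Set H} (hA : IsMonotoneOp A) {β : ℝ} (hβ : 0 < β)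
    {J : H → H} (hJ : IsResolvent A β J) {q : H} (hq : (0 : H) ∈ A q) (w : H) :
    ‖w - J w‖ ≤ ‖w - q‖ := by
  have h := resolvent_key hA hβ hJ hq w
  have e : w - q = (w - J w) + (J w - q) := by abel
  have hsq : ‖w - q‖ ^ 2 = ‖w - J w‖ ^ 2 + 2 * ⟪w - J w, J w - q⟫ + ‖J w - q‖ ^ 2 := by
    rw [e, norm_add_sq_real]
  rw [real_inner_comm] at hsq
  by_contra hlt
  push_neg at hlt
  nlinarith [norm_nonneg (w - q), norm_nonneg (w - J w), norm_nonneg (J w - q)]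

lemma resolvent_fixed {A : H → Set H} (hA : IsMonotoneOp A) {β : ℝ} (hβ : 0 < β)
    {J : H → H} (hJ : IsResolvent A β J) {q : H} (hq : (0 : H) ∈ A q) :
    J q = q := by
  have h := resolvent_key hA hβ hJ hq q
  have e : (q : H) - J q = -(J q - q) := by abel
  rw [e, inner_neg_right, real_inner_self_eq_norm_sq] at h
  have : ‖J q - q‖ = 0 := by nlinarith [norm_nonneg (J q - q)]
  exact sub_eq_zero.mp (norm_eq_zero.mp this)

lemma inner_expand_aux (x y : H) (r s : ℝ) :
    ⟪y - x, r • x - s • y⟫ = r * ⟪x, y⟫ + s * ⟪x, y⟫ - s * ‖y‖ ^ 2 - r * ‖x‖ ^ 2 := by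
  simp only [inner_sub_left, inner_sub_right, real_inner_smul_right,
    real_inner_self_eq_norm_sq, real_inner_comm y x]
  ring

lemma resolvent_tendsto {A : H → Set H} (hA : IsMaximalMonotone A)
    (β : ℕ → ℝ) (hβpos : ∀ n, 0 < β n) (hβ : Tendsto β atTop atTop)
    (J : ℕ → H → H) (hJ : ∀ n, IsResolvent A (β n) (J n))
    (u p : H) (hp0 : (0 : H) ∈ A p)
    (hpmin : ∀ q, (0 : H) ∈ A q → ‖u - p‖ ≤ ‖u - q‖) :
    Tendsto (fun n => J n u) atTop (nhds p) := by
  set v : ℕ → H := fun n => J n u with hv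
  set a : ℕ → H := fun n => u - J n u with ha
  have hd : ∀ n, ‖a n‖ ≤ ‖u - p‖ := fun n => resolvent_le hA.1 (hβpos n) (hJ n) hp0 u
  set φ : ℕ → ℝ := fun n => ‖a n‖ ^ 2 with hφ
  -- pairwise comparison
  have pair : ∀ n m, β n ≤ β m →
      φ n ≤ φ m ∧ ‖v n - v m‖ ^ 2 ≤ φ m - φ n := by
    intro n m hnm
    have h := hA.1 (v n) _ (v m) _ (hJ n u) (hJ m u)
    have hvv : v n - v m = a m - a n := by simp only [hv, ha]; abel
    have hee : (β n)⁻¹ • (u - J n u) - (β m)⁻¹ • (u - J m u)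
        = (β n)⁻¹ • a n - (β m)⁻¹ • a m := rfl
    rw [hvv, hee, inner_expand_aux] at h
    have hx : 0 < (β n)⁻¹ := inv_pos.mpr (hβpos n)
    have hy : 0 < (β m)⁻¹ := inv_pos.mpr (hβpos m)
    have hyx : (β m)⁻¹ ≤ (β n)⁻¹ := inv_anti₀ (hβpos n) hnm
    have hcs := real_inner_le_norm (a n) (a m)
    have hs : 0 ≤ ‖a n‖ := norm_nonneg (a n)
    have ht : 0 ≤ ‖a m‖ := norm_nonneg (a m)
    have hmono : ‖a n‖ ≤ ‖a m‖ := by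
      by_contra hlt
      push_neg at hlt
      nlinarith [mul_pos (sub_pos.2 hlt) (sub_pos.2 (lt_of_le_of_lt
        (mul_le_mul_of_nonneg_right hyx ht)
        (mul_lt_mul_of_pos_left hlt hx)))]
    have htt : ‖a n‖ ^ 2 ≤ ‖a m‖ ^ 2 := by nlinarith
    have hib : ‖a n‖ ^ 2 ≤ ⟪a n, a m⟫ := by
      nlinarith [mul_nonneg hy.le (sub_nonneg.2 htt)]
    refine ⟨htt, ?_⟩
    have hns := norm_sub_sq_real (a m) (a n)
    rw [real_inner_comm] at hns
    rw [hvv]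
    simp only [hφ]
    nlinarith
  have hbdd : BddAbove (Set.range φ) := by
    refine ⟨‖u - p‖ ^ 2, ?_⟩
    rintro _ ⟨n, rfl⟩
    exact pow_le_pow_left₀ (norm_nonneg _) (hd n) 2
  set S := ⨆ n, φ n with hS
  have hle : ∀ n, φ n ≤ S := fun n => le_ciSup hbdd n
  have hC : CauchySeq v := by
    rw [Metric.cauchySeq_iff]
    intro ε hε
    obtain ⟨n₀, hn₀⟩ : ∃ n₀, S - ε ^ 2 < φ n₀ :=
      exists_lt_of_lt_ciSup (by nlinarith : S - ε ^ 2 < S)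
    obtain ⟨N, hN⟩ := (hβ.eventually_ge_atTop (β n₀)).exists_forall_of_atTop
    refine ⟨N, fun m hm n hn => ?_⟩
    have hφm : S - ε ^ 2 < φ m := lt_of_lt_of_le hn₀ (pair n₀ m (hN m hm)).1
    have hφn : S - ε ^ 2 < φ n := lt_of_lt_of_le hn₀ (pair n₀ n (hN n hn)).1
    have key : ‖v m - v n‖ ^ 2 < ε ^ 2 := by
      rcases le_total (β n) (β m) with hb | hb
      · rw [norm_sub_rev (v m) (v n)]
        linarith [(pair n m hb).2, hle m]
      · linarith [(pair m n hb).2, hle n]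
    rw [dist_eq_norm]
    exact lt_of_pow_lt_pow_left₀ 2 (le_of_lt hε) key
  obtain ⟨z, hz⟩ := cauchySeq_tendsto_of_complete hC
  have hsmall : Tendsto (fun n => (β n)⁻¹ • a n) atTop (nhds (0 : H)) := by
    have hb : ∀ n, ‖(β n)⁻¹ • a n‖ ≤ (β n)⁻¹ * ‖u - p‖ := by
      intro n
      rw [norm_smul, Real.norm_eq_abs, abs_of_pos (inv_pos.mpr (hβpos n))]
      exact mul_le_mul_of_nonneg_left (hd n) (le_of_lt (inv_pos.mpr (hβpos n)))
    exact squeeze_zero_norm hb (by simpa using hβ.inv_tendsto_atTop.mul_const ‖u - p‖)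
  have hzA : (0 : H) ∈ A z := by
    apply hA.2
    intro w y hy
    have hterm : Tendsto (fun n => ⟪w - v n, y - (β n)⁻¹ • a n⟫) atTop
        (nhds ⟪w - z, y - 0⟫) :=
      Tendsto.inner (tendsto_const_nhds.sub hz) (tendsto_const_nhds.sub hsmall)
    exact ge_of_tendsto' hterm fun n => hA.1 w y (v n) ((β n)⁻¹ • a n) hy (hJ n u)
  have hnz : Tendsto (fun n => ‖a n‖) atTop (nhds ‖u - z‖) :=
    (tendsto_const_nhds.sub hz).norm
  have h1 : ‖u - z‖ ≤ ‖u - p‖ := le_of_tendsto' hnz hd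
  have h2 : ‖u - p‖ ≤ ‖u - z‖ := hpmin z hzA
  have h12 : ‖u - z‖ = ‖u - p‖ := le_antisymm h1 h2
  have h3 : 0 ≤ ⟪z - p, u - z⟫ := by
    have hterm : Tendsto (fun n => ⟪v n - p, u - v n⟫) atTop
        (nhds ⟪z - p, u - z⟫) :=
      Tendsto.inner (hz.sub_const p) (tendsto_const_nhds.sub hz)
    exact ge_of_tendsto' hterm (fun n => resolvent_key hA.1 (hβpos n) (hJ n) hp0 u)
  have e : u - p = (u - z) + (z - p) := by abel
  have hsq : ‖u - p‖ ^ 2 = ‖u - z‖ ^ 2 + 2 * ⟪u - z, z - p⟫ + ‖z - p‖ ^ 2 := by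
    rw [e, norm_add_sq_real]
  rw [real_inner_comm, h12] at hsq
  have hq0 : ‖z - p‖ ^ 2 ≤ 0 := by linarith
  have hzp : z = p := by
    have h0 : ‖z - p‖ ^ 2 = 0 := le_antisymm hq0 (sq_nonneg _)
    have := pow_eq_zero_iff two_ne_zero |>.mp h0
    exact sub_eq_zero.mp (norm_eq_zero.mp this)
  rwa [hzp] at hz

/-- Boikanyo–Moroşanu / Djafari Rouhani–Moradi: with `λ_n ∈ (0,1)`, `λ_n → 1`,
`β_n → ∞` and `(1-λ_n) e_n → 0`, the sequence
`x_{n+1} = (I + β_n A)⁻¹(λ_n u + (1-λ_n)(x_n + e_n))` converges strongly to `P_F u`. -/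
theorem stmt_6 (A : H → Set H) (hA : IsMaximalMonotone A)
    (F : Set H) (hF : F = {x | (0 : H) ∈ A x}) (hne : F.Nonempty)
    (lam : ℕ → ℝ) (hlam : ∀ n, lam n ∈ Set.Ioo (0 : ℝ) 1)
    (hlam1 : Tendsto lam atTop (nhds 1))
    (β : ℕ → ℝ) (hβpos : ∀ n, 0 < β n) (hβ : Tendsto β atTop atTop)
    (u : H) (e : ℕ → H)
    (he : Tendsto (fun n => (1 - lam n) • e n) atTop (nhds (0 : H)))
    (J : ℕ → H → H) (hJ : ∀ n, IsResolvent A (β n) (J n))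
    (x : ℕ → H) (hx : ∀ n, x (n + 1) = J n (lam n • u + (1 - lam n) • (x n + e n)))
    (p : H) (hp : IsProjection F u p) :
    Tendsto x atTop (nhds p) := by
  have h0p : (0 : H) ∈ A p := by have := hp.1; rwa [hF] at this
  have hpmin : ∀ q, (0 : H) ∈ A q → ‖u - p‖ ≤ ‖u - q‖ := fun q hq =>
    hp.2 q (by rw [hF]; exact hq)
  have hv : Tendsto (fun n => J n u) atTop (nhds p) :=
    resolvent_tendsto hA β hβpos hβ J hJ u p h0p hpmin
  set c : ℕ → ℝ := fun n => ‖(1 - lam n) • e n‖ with hc'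
  have hc : Tendsto c atTop (nhds 0) := by simpa using he.norm
  set d : ℝ := ‖u - p‖ with hd'
  -- choose N₁
  obtain ⟨N₁, hN₁⟩ : ∃ N, ∀ n ≥ N, 1 / 2 ≤ lam n ∧ c n ≤ 1 := by
    have h1 : ∀ᶠ n in atTop, 1 / 2 ≤ lam n := by
      have := Metric.tendsto_atTop.mp hlam1 (1 / 2) (by norm_num)
      obtain ⟨N, hN⟩ := this
      exact eventually_atTop.mpr ⟨N, fun n hn => by
        have := hN n hn
        rw [Real.dist_eq] at this
        have := abs_lt.mp this
        linarith [this.1]⟩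
    have h2 : ∀ᶠ n in atTop, c n ≤ 1 := by
      have := Metric.tendsto_atTop.mp hc 1 (by norm_num)
      obtain ⟨N, hN⟩ := this
      exact eventually_atTop.mpr ⟨N, fun n hn => by
        have := hN n hn
        rw [Real.dist_eq, sub_zero] at this
        exact le_of_lt (lt_of_abs_lt this)⟩
    exact eventually_atTop.mp (h1.and h2)
  set M : ℝ := max ‖x N₁ - p‖ (d + 2) with hM'
  have hMd : d + 2 ≤ M := le_max_right _ _
  have hd0 : 0 ≤ d := norm_nonneg _
  -- boundedness
  have hbound : ∀ n, N₁ ≤ n → ‖x n - p‖ ≤ M := by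
    intro n hn
    induction n, hn using Nat.le_induction with
    | base => exact le_max_left _ _
    | succ n hn ih =>
      have hlamn := hlam n
      have hl12 := (hN₁ n hn).1
      have hcn := (hN₁ n hn).2
      have hyp : lam n • u + (1 - lam n) • (x n + e n) - p
          = lam n • (u - p) + (1 - lam n) • (x n - p) + (1 - lam n) • e n := by
        module
      have hnorm : ‖lam n • u + (1 - lam n) • (x n + e n) - p‖
          ≤ lam n * d + (1 - lam n) * ‖x n - p‖ + c n := by
        rw [hyp]
        refine le_trans (norm_add_le _ _) ?_
        have t1 : ‖lam n • (u - p) + (1 - lam n) • (x n - p)‖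
            ≤ lam n * d + (1 - lam n) * ‖x n - p‖ := by
          refine le_trans (norm_add_le _ _) ?_
          rw [norm_smul, norm_smul, Real.norm_eq_abs, Real.norm_eq_abs,
            abs_of_pos hlamn.1, abs_of_nonneg (by linarith [hlamn.2] : (0:ℝ) ≤ 1 - lam n)]
        linarith [t1]
      have hfix : J n p = p := resolvent_fixed hA.1 (hβpos n) (hJ n) h0p
      have hstep : ‖x (n + 1) - p‖ ≤ lam n * d + (1 - lam n) * ‖x n - p‖ + c n := by
        rw [hx n]
        calc ‖J n (lam n • u + (1 - lam n) • (x n + e n)) - p‖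
            = ‖J n (lam n • u + (1 - lam n) • (x n + e n)) - J n p‖ := by rw [hfix]
          _ ≤ ‖lam n • u + (1 - lam n) • (x n + e n) - p‖ :=
              resolvent_nonexpansive hA.1 (hβpos n) (hJ n) _ _
          _ ≤ _ := hnorm
      nlinarith [hlamn.1, hlamn.2, ih, hMd, hl12, hcn, hstep]
  -- final estimate
  set g : ℕ → ℝ := fun n => (1 - lam n) * (M + d) + c n + ‖J n u - p‖ with hg'
  have hg0 : Tendsto g atTop (nhds 0) := by
    have t1 : Tendsto (fun n => (1 - lam n) * (M + d)) atTop (nhds 0) := by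
      have : Tendsto (fun n => 1 - lam n) atTop (nhds 0) := by
        simpa using hlam1.const_sub 1
      simpa using this.mul_const (M + d)
    have t3 : Tendsto (fun n => ‖J n u - p‖) atTop (nhds 0) := by
      simpa using (hv.sub_const p).norm
    simpa using (t1.add hc).add t3
  have hfin : ∀ᶠ n in atTop, ‖x (n + 1) - p‖ ≤ g n := by
    refine eventually_atTop.mpr ⟨N₁, fun n hn => ?_⟩
    have hlamn := hlam n
    have hyu : lam n • u + (1 - lam n) • (x n + e n) - u
        = (1 - lam n) • (x n - u) + (1 - lam n) • e n := by
      module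
    have hxu : ‖x n - u‖ ≤ M + d := by
      refine le_trans (norm_sub_le_norm_sub_add_norm_sub _ p _) ?_
      rw [norm_sub_rev p u]
      exact add_le_add (hbound n hn) le_rfl
    have hyn : ‖lam n • u + (1 - lam n) • (x n + e n) - u‖ ≤ (1 - lam n) * (M + d) + c n := by
      rw [hyu]
      refine le_trans (norm_add_le _ _) ?_
      have : ‖(1 - lam n) • (x n - u)‖ ≤ (1 - lam n) * (M + d) := by
        rw [norm_smul, Real.norm_eq_abs,
          abs_of_nonneg (by linarith [hlamn.2] : (0:ℝ) ≤ 1 - lam n)]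
        exact mul_le_mul_of_nonneg_left hxu (by linarith [hlamn.2])
      linarith
    calc ‖x (n + 1) - p‖ = ‖J n (lam n • u + (1 - lam n) • (x n + e n)) - p‖ := by rw [hx n]
      _ ≤ ‖J n (lam n • u + (1 - lam n) • (x n + e n)) - J n u‖ + ‖J n u - p‖ :=
          norm_sub_le_norm_sub_add_norm_sub _ _ _
      _ ≤ ‖lam n • u + (1 - lam n) • (x n + e n) - u‖ + ‖J n u - p‖ := by
          gcongr; exact resolvent_nonexpansive hA.1 (hβpos n) (hJ n) _ _
      _ ≤ g n := by simp only [hg']; linarith [hyn]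
  have hshift : Tendsto (fun n => x (n + 1) - p) atTop (nhds 0) :=
    squeeze_zero_norm' hfin hg0
  have : Tendsto (fun n => x n - p) atTop (nhds 0) :=
    (tendsto_add_atTop_iff_nat 1).mp hshift
  exact tendsto_sub_nhds_zero_iff.mp this
end

section
/- Let φ : H → (−∞, +∞] be a proper convex lower semicontinuous function on a real Hilbert space H whose set of minimizers F is nonempty. Suppose β_n → ∞, α_n → 0, α_n e_n → 0, and u_n → u. Then the sequence x_{n+1} = argmin_{x∈H} { φ(x) + (1/(2β_n))‖x − (u_n + α_n(x_n + e_n))‖² } converges strongly to P_F u, the projection of u onto the set of minimizers of φ. -/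
/-!
Write `y_n = u_n + α_n (x_n + e_n)`, so that `x_{n+1} = prox_{β_n φ}(y_n)`. Comparing the
proximal objective at `x_{n+1}` with its values on the sublevel set `{φ ≤ φ(x_{n+1})}` shows
that `x_{n+1}` is the metric projection of `y_n` onto that convex set, which contains the set
`F` of minimizers; hence `‖x_{n+1} - p‖² ≤ ⟪x_{n+1} - p, y_n - p⟫`. Since `α_n → 0` this keeps
`(x_n)` bounded, so `y_n → u`, and since `β_n → ∞` the values `φ(x_{n+1})` tend to `min φ`.
A weak cluster point of `(x_{n+1})` therefore lies in every closed convex sublevel set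
`{φ ≤ a}`, `a > min φ`, i.e. in `F`, and the variational characterization of `p = P_F u` gives
`limsup ⟪x_{n+1} - p, u - p⟫ ≤ 0`. Splitting `y_n - p = (y_n - u) + (u - p)` in the first
inequality then forces `‖x_{n+1} - p‖ → 0`.
-/

open scoped RealInnerProductSpace
open Filter

variable {H : Type*} [NormedAddCommGroup H] [InnerProductSpace ℝ H] [CompleteSpace H]

/-- `φ` is convex (as an extended-real-valued function). -/
def ERealConvexOn (φ : H → EReal) : Prop :=
  ∀ x y : H, ∀ t : ℝ, 0 ≤ t → t ≤ 1 →
    φ (t • x + (1 - t) • y) ≤ (t : EReal) * φ x + ((1 - t : ℝ) : EReal) * φ y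

open Topology

section Projection

variable {E : Type*} [NormedAddCommGroup E] [InnerProductSpace ℝ E]

theorem IsProjection.inner_sub_le_zero {K : Set E} {u p q : E} (hp : IsProjection K u p)
    (hK : Convex ℝ K) (hq : q ∈ K) : ⟪u - p, q - p⟫ ≤ 0 := by
  have : Nonempty K := ⟨⟨p, hp.1⟩⟩
  refine (norm_eq_iInf_iff_real_inner_le_zero hK hp.1).1 ?_ q hq
  exact le_antisymm (le_ciInf fun w => hp.2 w w.2)
    (ciInf_le ⟨0, Set.forall_mem_range.2 fun _ => norm_nonneg _⟩ (⟨p, hp.1⟩ : K))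

theorem IsProjection.norm_sub_sq_le_inner {K : Set E} {u p q : E} (hp : IsProjection K u p)
    (hK : Convex ℝ K) (hq : q ∈ K) : ‖p - q‖ ^ 2 ≤ ⟪p - q, u - q⟫ := by
  have hsplit : ⟪p - q, u - q⟫ = ‖p - q‖ ^ 2 - ⟪u - p, q - p⟫ := by
    rw [← sub_add_sub_cancel u p q, inner_add_right, real_inner_self_eq_norm_sq,
      real_inner_comm, ← neg_sub q p, inner_neg_right]
    ring
  linarith [hp.inner_sub_le_zero hK hq]

theorem norm_le_norm_of_sq_le_inner {a b : E} (h : ‖a‖ ^ 2 ≤ ⟪a, b⟫) : ‖a‖ ≤ ‖b‖ := by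
  nlinarith [real_inner_le_norm a b, norm_nonneg a, norm_nonneg b]

theorem ERealConvexOn.convex_sublevel {φ : E → EReal} (hφ : ERealConvexOn φ) (a : EReal) :
    Convex ℝ {w | φ w ≤ a} := by
  intro x hx y hy s t hs ht hst
  obtain rfl : t = 1 - s := by linarith
  calc φ (s • x + (1 - s) • y) ≤ (s : EReal) * φ x + ((1 - s : ℝ) : EReal) * φ y :=
        hφ x y s hs (by linarith)
    _ ≤ (s : EReal) * a + ((1 - s : ℝ) : EReal) * a :=
        add_le_add (mul_le_mul_of_nonneg_left hx (EReal.coe_nonneg.2 hs))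
          (mul_le_mul_of_nonneg_left hy (EReal.coe_nonneg.2 ht))
    _ = a := by
        rw [← EReal.right_distrib_of_nonneg (EReal.coe_nonneg.2 hs) (EReal.coe_nonneg.2 ht),
          ← EReal.coe_add, add_sub_cancel, EReal.coe_one, one_mul]

end Projection

section Prox

variable {E : Type*} [NormedAddCommGroup E]

/-- `IsProx φ β y x` says that `x = prox_{βφ}(y)`, a minimizer of `φ + ‖· - y‖² / (2β)`. -/
def IsProx (φ : E → EReal) (β : ℝ) (y x : E) : Prop :=
  ∀ z, φ x + ((1 / (2 * β) * ‖x - y‖ ^ 2 : ℝ) : EReal) ≤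
    φ z + ((1 / (2 * β) * ‖z - y‖ ^ 2 : ℝ) : EReal)

theorem IsProx.le_add {φ : E → EReal} {β : ℝ} {y x : E} (h : IsProx φ β y x) (hβ : 0 ≤ β)
    (z : E) :
    φ x ≤ φ z + ((1 / (2 * β) * ‖z - y‖ ^ 2 : ℝ) : EReal) :=
  le_trans (le_add_of_nonneg_right (EReal.coe_nonneg.2 (by positivity))) (h z)

theorem IsProx.isProjection {φ : E → EReal} {β : ℝ} {y x : E} (h : IsProx φ β y x) (hβ : 0 < β)
    (hx : φ x ≠ ⊤) (hx' : φ x ≠ ⊥) :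
    IsProjection {w | φ w ≤ φ x} y x := by
  refine ⟨le_refl (φ x), fun w hw => ?_⟩
  obtain ⟨r, hr⟩ : ∃ r : ℝ, φ x = r := ⟨_, (EReal.coe_toReal hx hx').symm⟩
  -- on this sublevel set the prox inequality reduces to the comparison of the distance terms
  have hle := (h w).trans (add_le_add_left hw _)
  rw [hr, ← EReal.coe_add, ← EReal.coe_add, EReal.coe_le_coe_iff, add_le_add_iff_left] at hle
  rw [norm_sub_rev y x, norm_sub_rev y w]
  exact le_of_pow_le_pow_left₀ two_ne_zero (norm_nonneg _)
    (le_of_mul_le_mul_left hle (by positivity))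

theorem eventually_lt_of_isProx {φ : E → EReal} {β : ℕ → ℝ} {y z : ℕ → E} {u : E}
    (hβ : Tendsto β atTop atTop) (hy : Tendsto y atTop (𝓝 u))
    (h : ∀ n, IsProx φ (β n) (y n) (z n)) (q : E) {a : EReal} (ha : φ q < a) :
    ∀ᶠ n in atTop, φ (z n) < a := by
  have hpen : Tendsto (fun n => 1 / (2 * β n) * ‖q - y n‖ ^ 2) atTop (𝓝 0) := by
    have hinv : Tendsto (fun n => 1 / (2 * β n)) atTop (𝓝 0) :=
      (hβ.const_mul_atTop two_pos).inv_tendsto_atTop.congr fun n => (one_div _).symm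
    simpa using hinv.mul ((hy.const_sub q).norm.pow 2)
  have hbound : Tendsto (fun n => φ q + ((1 / (2 * β n) * ‖q - y n‖ ^ 2 : ℝ) : EReal)) atTop
      (𝓝 (φ q)) := by
    have hadd := EReal.continuousAt_add (p := (φ q, ((0 : ℝ) : EReal)))
      (.inr (EReal.coe_ne_bot 0)) (.inr (EReal.coe_ne_top 0))
    have := hadd.tendsto.comp (tendsto_const_nhds.prodMk_nhds
      ((continuous_coe_real_ereal.tendsto 0).comp hpen))
    rwa [EReal.coe_zero, add_zero] at this
  filter_upwards [hbound.eventually_lt_const ha, hβ.eventually_ge_atTop 0] with n hn hβn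
  exact ((h n).le_add hβn q).trans_lt hn

variable [InnerProductSpace ℝ E]

theorem IsProx.norm_sub_sq_le_inner {φ : E → EReal} {β : ℝ} {y x : E} (h : IsProx φ β y x)
    (hβ : 0 < β) (hφ : ERealConvexOn φ) (hx : φ x ≠ ⊥) {q : E} (hq : ∀ w, φ q ≤ φ w)
    (hq' : φ q ≠ ⊤) :
    ‖x - q‖ ^ 2 ≤ ⟪x - q, y - q⟫ := by
  have hxtop : φ x ≠ ⊤ := ne_top_of_le_ne_top
    (EReal.add_ne_top hq' (EReal.coe_ne_top _)) (h.le_add hβ.le q)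
  exact (h.isProjection hβ hxtop hx).norm_sub_sq_le_inner (hφ.convex_sublevel _) (hq x)

end Prox

section WeakClusterPoints

variable {E : Type*} [NormedAddCommGroup E] [InnerProductSpace ℝ E]

theorem Convex.isClosed_toWeakSpace_image {C : Set E} (hC : Convex ℝ C) (hC' : IsClosed C) :
    IsClosed (toWeakSpace ℝ E '' C) := by
  rw [← hC'.closure_eq, hC.toWeakSpace_closure ℝ]
  exact isClosed_closure

/-- Banach–Alaoglu, transported from `WeakDual ℝ E` to `WeakSpace ℝ E` by the Riesz map. -/
theorem exists_mapClusterPt_toWeakSpace [CompleteSpace E] {ι : Type*} {l : Filter ι} [l.NeBot]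
    {z : ι → E} (hz : IsBoundedUnder (· ≤ ·) l fun i => ‖z i‖) :
    ∃ g : E, MapClusterPt (toWeakSpace ℝ E g) l fun i => toWeakSpace ℝ E (z i) := by
  obtain ⟨R, hR⟩ := hz
  let riesz : E → WeakDual ℝ E := fun w => StrongDual.toWeakDual (InnerProductSpace.toDual ℝ E w)
  let back : WeakDual ℝ E → WeakSpace ℝ E := fun f =>
    toWeakSpace ℝ E ((InnerProductSpace.toDual ℝ E).symm (WeakDual.toStrongDual f))
  have hback : Continuous back := by
    refine WeakBilin.continuous_of_continuous_eval _ fun f => ?_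
    convert WeakDual.eval_continuous ((InnerProductSpace.toDual ℝ E).symm f) using 2 with a
    change f ((InnerProductSpace.toDual ℝ E).symm (WeakDual.toStrongDual a)) = a _
    rw [← InnerProductSpace.toDual_symm_apply, real_inner_comm, InnerProductSpace.toDual_symm_apply]
    rfl
  have hball : ∀ᶠ i in l,
      riesz (z i) ∈ WeakDual.toStrongDual ⁻¹' Metric.closedBall (0 : StrongDual ℝ E) R := by
    filter_upwards [hR] with i hi
    simpa [riesz] using hi
  obtain ⟨f, -, hf⟩ := (WeakDual.isCompact_closedBall (𝕜 := ℝ) (0 : StrongDual ℝ E) R)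
    |>.exists_mapClusterPt (le_principal_iff.2 hball)
  refine ⟨(InnerProductSpace.toDual ℝ E).symm (WeakDual.toStrongDual f), ?_⟩
  convert hf.continuousAt_comp hback.continuousAt using 1
  ext i
  simp [back, riesz]

theorem MapClusterPt.mem_of_toWeakSpace {ι : Type*} {l : Filter ι} {z : ι → E} {g : E}
    (hg : MapClusterPt (toWeakSpace ℝ E g) l fun i => toWeakSpace ℝ E (z i)) {C : Set E}
    (hC : IsClosed C) (hC' : Convex ℝ C) (hz : ∀ᶠ i in l, z i ∈ C) : g ∈ C := by
  obtain ⟨w, hw, hwg⟩ := (hC'.isClosed_toWeakSpace_image hC).mem_of_mapClusterPt hg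
    (hz.mono fun i hi => Set.mem_image_of_mem _ hi)
  exact (toWeakSpace ℝ E).injective hwg ▸ hw

/-- A weak cluster point of the `z n` lying in the half-space `⟪· - p, u - p⟫ ≥ δ` would lie in
`F`, contradicting the variational inequality of the projection `p`. -/
theorem eventually_inner_sub_lt_of_eventually_mem [CompleteSpace E] {ι : Type*}
    {S : ι → Set E} (hS : ∀ i, IsClosed (S i)) (hS' : ∀ i, Convex ℝ (S i)) {F : Set E}
    (hF : Convex ℝ F) (hSF : ⋂ i, S i ⊆ F) {u p : E} (hp : IsProjection F u p) {z : ℕ → E}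
    (hz : IsBoundedUnder (· ≤ ·) atTop fun n => ‖z n‖) (hzS : ∀ i, ∀ᶠ n in atTop, z n ∈ S i)
    {δ : ℝ} (hδ : 0 < δ) : ∀ᶠ n in atTop, ⟪z n - p, u - p⟫ < δ := by
  by_contra h
  set P : Set E := {w | δ + ⟪u - p, p⟫ ≤ ⟪u - p, w⟫}
  have hP : IsClosed P := isClosed_le continuous_const (by fun_prop)
  have hP' : Convex ℝ P := convex_halfSpace_ge (innerₛₗ ℝ (u - p)).isLinear _
  have hfreq : ∃ᶠ n in atTop, z n ∈ P := by
    refine (not_eventually.1 h).mono fun n hn => ?_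
    rw [not_lt, inner_sub_left] at hn
    show δ + ⟪u - p, p⟫ ≤ ⟪u - p, z n⟫
    linarith [real_inner_comm (u - p) (z n), real_inner_comm (u - p) p]
  have := frequently_iff_neBot.1 hfreq
  obtain ⟨g, hg⟩ :=
    exists_mapClusterPt_toWeakSpace (hz.mono (inf_le_left (b := 𝓟 {n | z n ∈ P})))
  have hgF : g ∈ F := hSF <| Set.mem_iInter.2 fun i =>
    hg.mem_of_toWeakSpace (hS i) (hS' i) ((hzS i).filter_mono inf_le_left)
  have hgP : g ∈ P := hg.mem_of_toWeakSpace hP hP' (mem_inf_of_right (mem_principal_self _))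
  have hgp := hp.inner_sub_le_zero hF hgF
  rw [inner_sub_right] at hgp
  exact hδ.not_ge (by linarith [show δ + ⟪u - p, p⟫ ≤ ⟪u - p, g⟫ from hgP])

end WeakClusterPoints

section Sequences

variable {E : Type*} [NormedAddCommGroup E] [InnerProductSpace ℝ E]

theorem isBoundedUnder_of_le_add_mul {a b c : ℕ → ℝ} (ha : ∀ n, 0 ≤ a n)
    (hb : IsBoundedUnder (· ≤ ·) atTop b) (hc : Tendsto c atTop (𝓝 0))
    (h : ∀ᶠ n in atTop, a (n + 1) ≤ b n + c n * a n) : IsBoundedUnder (· ≤ ·) atTop a := by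
  obtain ⟨K, hK⟩ := hb
  obtain ⟨N, hN⟩ := eventually_atTop.1
    ((eventually_map.1 hK).and ((hc.eventually_le_const one_half_pos).and h))
  -- once `b n ≤ K` and `c n ≤ 1/2`, the bound `max (a N) (2K)` passes from `a n` to `a (n + 1)`
  refine isBoundedUnder_of_eventually_le (a := max (a N) (2 * K))
    (eventually_atTop.2 ⟨N, fun n hn => ?_⟩)
  induction n, hn using Nat.le_induction with
  | base => exact le_max_left _ _
  | succ n hn ih =>
    obtain ⟨hbK, hcn, hrec⟩ := hN n hn
    nlinarith [ha n, le_max_right (a N) (2 * K)]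

theorem isBoundedUnder_norm_of_norm_sub_le {x e v : ℕ → E} {α : ℕ → ℝ} {u p : E}
    (hv : Tendsto v atTop (𝓝 u)) (hα : Tendsto α atTop (𝓝 0))
    (hαe : Tendsto (fun n => α n • e n) atTop (𝓝 0))
    (hx : ∀ᶠ n in atTop, ‖x (n + 1) - p‖ ≤ ‖v n + α n • (x n + e n) - p‖) :
    IsBoundedUnder (· ≤ ·) atTop fun n => ‖x n‖ := by
  refine isBoundedUnder_of_le_add_mul (b := fun n => ‖v n - p‖ + ‖α n • e n‖ + ‖p‖)
    (c := fun n => ‖α n‖) (fun n => norm_nonneg _)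
    (((hv.sub_const p).norm.add hαe.norm).add_const _).isBoundedUnder_le
    (by simpa using hα.norm) ?_
  filter_upwards [hx] with n hn
  have hsplit : v n + α n • (x n + e n) - p = (v n - p) + α n • e n + α n • x n := by module
  calc ‖x (n + 1)‖ ≤ ‖x (n + 1) - p‖ + ‖p‖ := norm_le_norm_sub_add _ _
    _ ≤ ‖v n - p‖ + ‖α n • e n‖ + ‖α n • x n‖ + ‖p‖ := by
        rw [hsplit] at hn
        linarith [norm_add₃_le (a := v n - p) (b := α n • e n) (c := α n • x n)]
    _ = ‖v n - p‖ + ‖α n • e n‖ + ‖p‖ + ‖α n‖ * ‖x n‖ := by rw [norm_smul (α n) (x n)]; ring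

theorem tendsto_of_norm_sq_le_inner {z y : ℕ → E} {u p : E}
    (hz : IsBoundedUnder (· ≤ ·) atTop fun n => ‖z n‖) (hy : Tendsto y atTop (𝓝 u))
    (hzy : ∀ᶠ n in atTop, ‖z n - p‖ ^ 2 ≤ ⟪z n - p, y n - p⟫)
    (hlim : ∀ δ > 0, ∀ᶠ n in atTop, ⟪z n - p, u - p⟫ < δ) : Tendsto z atTop (𝓝 p) := by
  have hcross : Tendsto (fun n => ⟪z n - p, y n - u⟫) atTop (𝓝 0) := by
    have hzp : IsBoundedUnder (· ≤ ·) atTop fun n => ‖‖z n - p‖‖ := by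
      obtain ⟨R, hR⟩ := hz
      refine isBoundedUnder_of_eventually_le (a := R + ‖p‖) ?_
      filter_upwards [eventually_map.1 hR] with n hn
      simpa using (norm_sub_le (z n) p).trans (add_le_add_left hn _)
    refine squeeze_zero_norm (fun n => (abs_real_inner_le_norm _ _).trans_eq (mul_comm _ _))
      ((tendsto_iff_norm_sub_tendsto_zero.1 hy).zero_mul_isBoundedUnder_le hzp)
  rw [tendsto_iff_norm_sub_tendsto_zero]
  refine tendsto_order.2 ⟨fun a ha => .of_forall fun n => ha.trans_le (norm_nonneg _),
    fun ε hε => ?_⟩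
  filter_upwards [hzy, hlim (ε ^ 2 / 2) (by positivity),
    hcross.eventually_lt_const (by positivity : (0 : ℝ) < ε ^ 2 / 2)] with n h₁ h₂ h₃
  have hsplit : ⟪z n - p, y n - p⟫ = ⟪z n - p, y n - u⟫ + ⟪z n - p, u - p⟫ := by
    rw [← inner_add_right, sub_add_sub_cancel]
  exact lt_of_pow_lt_pow_left₀ 2 hε.le (by linarith)

end Sequences

theorem stmt_7_general (φ : H → EReal)
    (hproper : ∃ z, φ z ≠ ⊤) (hbot : ∀ z, φ z ≠ ⊥)
    (hconv : ERealConvexOn φ) (hlsc : LowerSemicontinuous φ)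
    (F : Set H) (hF : F = {z | ∀ w, φ z ≤ φ w})
    (β : ℕ → ℝ) (hβ : Tendsto β atTop atTop)
    (α : ℕ → ℝ) (hα : Tendsto α atTop (nhds 0))
    (e : ℕ → H) (hαe : Tendsto (fun n => α n • e n) atTop (nhds 0))
    (useq : ℕ → H) (u : H) (hu : Tendsto useq atTop (nhds u))
    (x : ℕ → H)
    (hx : ∀ n, ∀ z : H,
      φ (x (n + 1)) +
          ((1 / (2 * β n) * ‖x (n + 1) - (useq n + α n • (x n + e n))‖ ^ 2 : ℝ) : EReal) ≤
        φ z + ((1 / (2 * β n) * ‖z - (useq n + α n • (x n + e n))‖ ^ 2 : ℝ) : EReal))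
    (p : H) (hp : IsProjection F u p) :
    Tendsto x atTop (nhds p) := by
  set y : ℕ → H := fun n => useq n + α n • (x n + e n)
  have hprox : ∀ n, IsProx φ (β n) (y n) (x (n + 1)) := hx
  have hpmin : ∀ w, φ p ≤ φ w := by simpa [hF] using hp.1
  have hptop : φ p ≠ ⊤ := hproper.elim fun z hz => ne_top_of_le_ne_top hz (hpmin z)
  have hFeq : F = {w | φ w ≤ φ p} := by
    rw [hF]
    ext w
    exact ⟨fun h => h p, fun h v => h.trans (hpmin v)⟩
  have hkey : ∀ᶠ n in atTop, ‖x (n + 1) - p‖ ^ 2 ≤ ⟪x (n + 1) - p, y n - p⟫ :=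
    (hβ.eventually_gt_atTop 0).mono fun n hβn =>
      (hprox n).norm_sub_sq_le_inner hβn hconv (hbot _) hpmin hptop
  have hbdd : IsBoundedUnder (· ≤ ·) atTop fun n => ‖x n‖ :=
    isBoundedUnder_norm_of_norm_sub_le hu hα hαe (hkey.mono fun n => norm_le_norm_of_sq_le_inner)
  have hbdd' := (tendsto_add_atTop_nat 1).isBoundedUnder_comp hbdd
  have hy : Tendsto y atTop (𝓝 u) := by
    simpa [y, smul_add] using hu.add ((hα.zero_smul_isBoundedUnder_le hbdd).add hαe)
  have hlim : ∀ δ > 0, ∀ᶠ n in atTop, ⟪x (n + 1) - p, u - p⟫ < δ := fun δ hδ =>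
    eventually_inner_sub_lt_of_eventually_mem (S := fun a : Set.Ioi (φ p) => {w | φ w ≤ a})
      (fun a => hlsc.isClosed_preimage a) (fun a => hconv.convex_sublevel a)
      (hFeq ▸ hconv.convex_sublevel _)
      (fun w hw => hFeq ▸
        le_of_forall_gt_imp_ge_of_dense fun a ha => Set.mem_iInter.1 hw ⟨a, ha⟩)
      hp hbdd' (fun a => (eventually_lt_of_isProx hβ hy hprox p a.2).mono fun _ h => h.le) hδ
  exact (tendsto_add_atTop_iff_nat 1).1 (tendsto_of_norm_sq_le_inner hbdd' hy hkey hlim)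

/-- Proximal algorithm for minimizing a proper convex lsc function `φ`: the iterates
`x_{n+1} = argmin_x { φ(x) + (1/(2β_n)) ‖x - (u_n + α_n(x_n + e_n))‖² }` converge
strongly to the projection of `u` onto the set of minimizers of `φ`. -/
theorem stmt_7 (φ : H → EReal)
    (hproper : ∃ z, φ z ≠ ⊤) (hbot : ∀ z, φ z ≠ ⊥)
    (hconv : ERealConvexOn φ) (hlsc : LowerSemicontinuous φ)
    (F : Set H) (hF : F = {z | ∀ w, φ z ≤ φ w}) (hne : F.Nonempty)
    (β : ℕ → ℝ) (hβpos : ∀ n, 0 < β n) (hβ : Tendsto β atTop atTop)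
    (α : ℕ → ℝ) (hα : Tendsto α atTop (nhds 0))
    (e : ℕ → H) (hαe : Tendsto (fun n => α n • e n) atTop (nhds 0))
    (useq : ℕ → H) (u : H) (hu : Tendsto useq atTop (nhds u))
    (x : ℕ → H)
    (hx : ∀ n, ∀ z : H,
      φ (x (n + 1)) +
          ((1 / (2 * β n) * ‖x (n + 1) - (useq n + α n • (x n + e n))‖ ^ 2 : ℝ) : EReal) ≤
        φ z + ((1 / (2 * β n) * ‖z - (useq n + α n • (x n + e n))‖ ^ 2 : ℝ) : EReal))
    (p : H) (hp : IsProjection F u p) :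
    Tendsto x atTop (nhds p) :=
  stmt_7_general φ hproper hbot hconv hlsc F hF β hβ α hα e hαe useq u hu x hx p hp
end
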